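/- For all x ∈ ℤ and y ∈ ℤ with y ≥ x−1, the tail sum of the kernel P satisfies ∑_{z ≥ y} P(x,z) = ∏_{z=x}^{y} p(z) (empty product equal to 1 when y = x−1). Moreover, if w(−1) < w(1), then: (a) for x < 0 and x−1 ≤ y < 0 one has ∑_{z ≥ y} P(x,z) ≥ q(1)^{y−x+1}; (b) for 0 ≤ x−1 ≤ y one has ∑_{z ≥ y} P(x,z) ≤ p(1)^{y−x+1}. -/

import Mathlib

open MeasureTheory Filter
open scoped BigOperators ENNReal

noncomputable section

/-- `p(x) = w(-x)/(w(x)+w(-x))`. -/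
def pfun (w : ℤ → ℝ) (x : ℤ) : ℝ := w (-x) / (w x + w (-x))

/-- `q(x) = w(x)/(w(x)+w(-x))`. -/
def qfun (w : ℤ → ℝ) (x : ℤ) : ℝ := w x / (w x + w (-x))

/-- The Markov transition kernel `P(x,y)`. -/
def Pker (w : ℤ → ℝ) (x y : ℤ) : ℝ :=
  if x - 1 ≤ y then (∏ z ∈ Finset.Icc x y, pfun w z) * qfun w (y + 1) else 0

/-- The `m`-step transition kernel. -/
def Pm (w : ℤ → ℝ) : ℕ → ℤ → ℤ → ℝ
  | 0, x, y => if x = y then 1 else 0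
  | m + 1, x, y => ∑' z : ℤ, Pm w m x z * Pker w z y

/-- The normalizing constant `Z`. -/
def Zconst (w : ℤ → ℝ) : ℝ :=
  2 * ∑' x : ℕ, ∏ z ∈ Finset.Icc (1 : ℤ) (x : ℤ), w (-z) / w z

/-- The stationary distribution `ρ`. -/
def rho (w : ℤ → ℝ) (x : ℤ) : ℝ :=
  (Zconst w)⁻¹ * ∏ z ∈ Finset.Icc (1 : ℤ) (|2 * x + 1| / 2), w (-z) / w z

/-- The weight function `w` is positive, nondecreasing and satisfies
`lim_{z→∞} (w(z) - w(-z)) > 0`. -/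
def GoodWeight (w : ℤ → ℝ) : Prop :=
  (∀ z, 0 < w z) ∧ (∀ z, w z ≤ w (z + 1)) ∧
    ∃ c > (0 : ℝ), ∀ᶠ z : ℤ in atTop, c ≤ w z - w (-z)

/-- `η` is a Markov chain with (sub)stochastic kernel `K` started at `a`,
characterized through its cylinder probabilities. -/
def KChain {Ω : Type*} [MeasurableSpace Ω] (μ : Measure Ω)
    (K : ℤ → ℤ → ℝ) (η : ℕ → Ω → ℤ) (a : ℤ) : Prop :=
  (∀ n, Measurable (η n)) ∧
  ∀ (n : ℕ) (x : ℕ → ℤ),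
    μ {ω | ∀ i ≤ n, η i ω = x i} =
      ENNReal.ofReal ((if x 0 = a then (1 : ℝ) else 0) *
        ∏ i ∈ Finset.range n, K (x i) (x (i + 1)))

/-!
The tail sum telescopes: for `z ≥ x - 1` one has `q = 1 - p`, so
`P(x,z) = ∏_{x}^{z} p - ∏_{x}^{z+1} p`, and the tail from `y` sums to `∏_{x}^{y} p` because the
partial products tend to `0`: eventually `w(z) - w(-z) ≥ c > 0` while `w(-z) ≤ w(0)`, so `p` stays
below a constant `r < 1`. The bounds come from `p` being antitone when `w` is monotone, with
`q(1) = p(-1)`.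
-/

open Finset

lemma hasSum_sub_succ_of_antitone {b : ℕ → ℝ} (hb : Antitone b)
    (hlim : Tendsto b atTop (nhds 0)) : HasSum (fun n => b n - b (n + 1)) (b 0) := by
  rw [hasSum_iff_tendsto_nat_of_nonneg fun n => sub_nonneg.2 (hb n.le_succ)]
  simp only [Finset.sum_range_sub']
  simpa using tendsto_const_nhds.sub hlim

lemma hasSum_int_of_hasSum_nat_add {α : Type*} [AddCommMonoid α] [TopologicalSpace α]
    {f : ℤ → α} {a : α} (y : ℤ) (hf : ∀ z < y, f z = 0)
    (h : HasSum (fun n : ℕ => f (y + n)) a) : HasSum f a := by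
  have hinj : Function.Injective (fun n : ℕ => y + (n : ℤ)) := fun m n hmn => by simpa using hmn
  refine (hinj.hasSum_iff fun z hz => hf z ?_).1 h
  by_contra! hyz
  exact hz ⟨(z - y).toNat, by simp [hyz]⟩

lemma prod_Icc_add_one {M : Type*} [CommMonoid M] {f : ℤ → M} {x z : ℤ} (h : x ≤ z + 1) :
    ∏ t ∈ Icc x (z + 1), f t = (∏ t ∈ Icc x z, f t) * f (z + 1) := by
  rw [← insert_Icc_right_eq_Icc_add_one h, prod_insert (by simp), mul_comm]

lemma qfun_eq_pfun_neg (w : ℤ → ℝ) (x : ℤ) : qfun w x = pfun w (-x) := by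
  rw [qfun, pfun, neg_neg, add_comm]

section Positive

variable {w : ℤ → ℝ} (hpos : ∀ z, 0 < w z)
include hpos

lemma pfun_nonneg (z : ℤ) : 0 ≤ pfun w z :=
  div_nonneg (hpos _).le (add_pos (hpos _) (hpos _)).le

lemma pfun_le_one (z : ℤ) : pfun w z ≤ 1 := by
  rw [pfun, div_le_one (add_pos (hpos _) (hpos _))]
  linarith [hpos z]

lemma qfun_eq_one_sub_pfun (z : ℤ) : qfun w z = 1 - pfun w z := by
  rw [qfun, pfun, eq_sub_iff_add_eq, ← add_div, div_self (add_pos (hpos _) (hpos _)).ne']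

lemma pfun_antitone (hmono : Monotone w) : Antitone (pfun w) := by
  intro a b hab
  rw [pfun, pfun, div_le_div_iff₀ (add_pos (hpos _) (hpos _)) (add_pos (hpos _) (hpos _))]
  have h₁ : w (-b) ≤ w (-a) := hmono (neg_le_neg hab)
  have h₂ : w a ≤ w b := hmono hab
  nlinarith [mul_le_mul h₁ h₂ (hpos a).le (hpos (-a)).le]

lemma Pker_eq_sub {x z : ℤ} (hxz : x - 1 ≤ z) :
    Pker w x z = ∏ t ∈ Icc x z, pfun w t - ∏ t ∈ Icc x (z + 1), pfun w t := by
  rw [Pker, if_pos hxz, prod_Icc_add_one (by omega), qfun_eq_one_sub_pfun hpos]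
  ring

end Positive

lemma GoodWeight.monotone {w : ℤ → ℝ} (hw : GoodWeight w) : Monotone w :=
  monotone_int_of_le_succ hw.2.1

lemma GoodWeight.exists_eventually_pfun_le {w : ℤ → ℝ} (hw : GoodWeight w) :
    ∃ r < 1, ∀ᶠ z in atTop, pfun w z ≤ r := by
  have hmono := hw.monotone
  obtain ⟨hpos, -, c, hc, hev⟩ := hw
  have hden : 0 < 2 * w 0 + c := by linarith [hpos 0]
  refine ⟨w 0 / (2 * w 0 + c), (div_lt_one hden).2 (by linarith [hpos 0]), ?_⟩
  filter_upwards [hev, eventually_ge_atTop 0] with z hcz hz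
  have hneg : w (-z) ≤ w 0 := hmono (by omega)
  rw [pfun, div_le_div_iff₀ (add_pos (hpos _) (hpos _)) hden]
  nlinarith [hpos (-z)]

lemma tendsto_prod_Icc_pfun {w : ℤ → ℝ} (hw : GoodWeight w) (x y : ℤ) :
    Tendsto (fun n : ℕ => ∏ t ∈ Icc x (y + n), pfun w t) atTop (nhds 0) := by
  obtain ⟨r, hr, hev⟩ := hw.exists_eventually_pfun_le
  have hshift : Tendsto (fun n : ℕ => y + n + 1) atTop atTop :=
    tendsto_atTop_add_const_right _ _ (tendsto_atTop_add_const_left _ _ tendsto_natCast_atTop_atTop)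
  refine Summable.tendsto_atTop_zero (summable_of_ratio_norm_eventually_le hr ?_)
  filter_upwards [hshift.eventually hev, eventually_ge_atTop (x - 1 - y).toNat] with n hn hxn
  have hsucc : y + ((n + 1 : ℕ) : ℤ) = y + n + 1 := by push_cast; ring
  rw [hsucc, prod_Icc_add_one (by omega), norm_mul, mul_comm]
  gcongr
  rwa [Real.norm_of_nonneg (pfun_nonneg hw.1 _)]

theorem hasSum_tail_Pker {w : ℤ → ℝ} (hw : GoodWeight w) {x y : ℤ} (hxy : x - 1 ≤ y) :
    HasSum (fun z => if y ≤ z then Pker w x z else 0) (∏ t ∈ Icc x y, pfun w t) := by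
  set b : ℕ → ℝ := fun n => ∏ t ∈ Icc x (y + n), pfun w t
  have hsucc (n : ℕ) : b (n + 1) = b n * pfun w (y + n + 1) := by
    simp only [b, Nat.cast_succ, ← add_assoc]
    exact prod_Icc_add_one (by omega)
  have hanti : Antitone b := antitone_nat_of_succ_le fun n => by
    rw [hsucc]
    exact mul_le_of_le_one_right (prod_nonneg fun t _ => pfun_nonneg hw.1 t) (pfun_le_one hw.1 _)
  refine hasSum_int_of_hasSum_nat_add y (fun z hz => if_neg (not_le.2 hz)) ?_
  convert hasSum_sub_succ_of_antitone hanti (tendsto_prod_Icc_pfun hw x y) using 1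
  · ext n
    rw [if_pos (by omega), Pker_eq_sub hw.1 (by omega)]
    simp only [b, Nat.cast_succ, ← add_assoc]
  · simp [b]

lemma card_Icc_eq_toNat (x y : ℤ) : #(Icc x y) = (y - x + 1).toNat := by
  rw [Int.card_Icc]
  congr 1
  ring

/-- tail sums of the kernel `P`, together with the stochastic domination
bounds valid under `w(-1) < w(1)`. -/
theorem stmt_8 (w : ℤ → ℝ) (hw : GoodWeight w) :
    (∀ x y : ℤ, x - 1 ≤ y →
      ∑' z : ℤ, (if y ≤ z then Pker w x z else 0) = ∏ z ∈ Finset.Icc x y, pfun w z) ∧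
    (w (-1) < w 1 →
      (∀ x y : ℤ, x < 0 → x - 1 ≤ y → y < 0 →
        qfun w 1 ^ (y - x + 1).toNat ≤ ∑' z : ℤ, (if y ≤ z then Pker w x z else 0)) ∧
      (∀ x y : ℤ, 0 ≤ x - 1 → x - 1 ≤ y →
        ∑' z : ℤ, (if y ≤ z then Pker w x z else 0) ≤ pfun w 1 ^ (y - x + 1).toNat)) := by
  have htsum {x y : ℤ} (hxy : x - 1 ≤ y) := (hasSum_tail_Pker hw hxy).tsum_eq
  have hanti := pfun_antitone hw.1 hw.monotone
  refine ⟨fun x y hxy => htsum hxy, fun _ => ⟨fun x y _ hxy hy => ?_, fun x y hx hxy => ?_⟩⟩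
  · rw [htsum hxy, qfun_eq_pfun_neg, ← card_Icc_eq_toNat, ← prod_const]
    exact prod_le_prod (fun _ _ => pfun_nonneg hw.1 _)
      fun z hz => hanti (by linarith [(mem_Icc.1 hz).2])
  · rw [htsum hxy, ← card_Icc_eq_toNat, ← prod_const]
    exact prod_le_prod (fun _ _ => pfun_nonneg hw.1 _)
      fun z hz => hanti (by linarith [(mem_Icc.1 hz).1])
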